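/- arXiv:2304.08955 — 2 statements merged into one kernel-verified Lean document; each statement's English description precedes it below -/
import Mathlib

section
/- Let ρ, p∥, p⊥ ∈ ℝ and H ∈ ℝ³ with H ≠ 0, and set b = H/|H|, τ = (p∥ − p⊥)/|H|², B = (1 − τ)·I₃ + τ·(b bᵀ). If ρ > 0, p⊥ > 0, 6p∥ − p⊥ > 0, and τ < 1, then the 9×9 block-diagonal matrix 𝒜₀ = diag(1/(2p⊥), ρ·I₃, B, 2/(6p∥ − p⊥), 1), i.e. the matrix with (1,1)-entry 1/(2p⊥), entries ρ on the diagonal positions 2,3,4, the 3×3 block B in rows/columns 5–7, entry 2/(6p∥ − p⊥) at position (8,8), entry 1 at position (9,9), and zeros elsewhere, is symmetric positive definite. -/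
set_option maxHeartbeats 1000000

/-- The 3×3 matrix `B = (1 − τ)·I₃ + τ·(b bᵀ)`. -/
noncomputable def cglB (τ : ℝ) (b : Fin 3 → ℝ) : Matrix (Fin 3) (Fin 3) ℝ :=
  (1 - τ) • (1 : Matrix (Fin 3) (Fin 3) ℝ) + τ • Matrix.of (fun i j => b i * b j)

/-- The 9×9 block-diagonal matrix `𝒜₀ = diag(1/(2p⊥), ρ·I₃, B, 2/(6p∥ − p⊥), 1)`
(rows/columns indexed from 0: entry 0 is `1/(2p⊥)`, entries 1–3 are `ρ`,
the block in rows/columns 4–6 is `B`, entry 7 is `2/(6p∥ − p⊥)`, entry 8 is `1`). -/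
noncomputable def cglA0 (ρ ppar pperp : ℝ) (B : Matrix (Fin 3) (Fin 3) ℝ) :
    Matrix (Fin 9) (Fin 9) ℝ :=
  Matrix.of fun i j =>
    if hi : 4 ≤ i.val ∧ i.val ≤ 6 then
      if hj : 4 ≤ j.val ∧ j.val ≤ 6 then B ⟨i.val - 4, by omega⟩ ⟨j.val - 4, by omega⟩ else 0
    else if i = j then
      if i.val = 0 then 1 / (2 * pperp)
      else if i.val ≤ 3 then ρ
      else if i.val = 7 then 2 / (6 * ppar - pperp)
      else 1
    else 0

theorem cgl_sum_univ_nine {M : Type*} [AddCommMonoid M] (f : Fin 9 → M) :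
    ∑ i, f i = f 0 + f 1 + f 2 + f 3 + f 4 + f 5 + f 6 + f 7 + f 8 := by
  rw [Fin.sum_univ_castSucc, Fin.sum_univ_eight]; rfl

theorem cgl_quadform (ρ ppar pperp τ : ℝ) (b : Fin 3 → ℝ) (x : Fin 9 → ℝ) :
    dotProduct x ((cglA0 ρ ppar pperp (cglB τ b)).mulVec x) =
      1/(2*pperp) * x 0^2 + ρ*(x 1^2 + x 2^2 + x 3^2)
        + ((1-τ)*(x 4^2 + x 5^2 + x 6^2) + τ*(b 0 * x 4 + b 1 * x 5 + b 2 * x 6)^2)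
        + 2/(6*ppar-pperp) * x 7^2 + x 8^2 := by
  simp (config := { decide := true }) [cglA0, cglB, dotProduct, Matrix.mulVec,
    cgl_sum_univ_nine, Matrix.one_apply,
    show (⟨(4:Fin 9).val - 4, by decide⟩ : Fin 3) = 0 from rfl,
    show (⟨(5:Fin 9).val - 4, by decide⟩ : Fin 3) = 1 from rfl,
    show (⟨(6:Fin 9).val - 4, by decide⟩ : Fin 3) = 2 from rfl]
  ring

theorem cglB_symm_apply (τ : ℝ) (b : Fin 3 → ℝ) (i j : Fin 3) :
    cglB τ b i j = cglB τ b j i := by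
  by_cases h : i = j
  · subst h; rfl
  · simp [cglB, Matrix.one_apply, h, Ne.symm h, mul_comm]

theorem cglA0_isSymm (ρ ppar pperp τ : ℝ) (b : Fin 3 → ℝ) :
    (cglA0 ρ ppar pperp (cglB τ b)).IsSymm := by
  ext i j
  simp only [Matrix.transpose_apply, cglA0, Matrix.of_apply]
  by_cases hi : 4 ≤ i.val ∧ i.val ≤ 6 <;> by_cases hj : 4 ≤ j.val ∧ j.val ≤ 6
  · rw [dif_pos hj, dif_pos hi, dif_pos hi, dif_pos hj, cglB_symm_apply]
  · rw [dif_neg hj, dif_pos hi, dif_neg hj, if_neg (fun h => hj (by rw [h]; exact hi))]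
  · rw [dif_pos hj, dif_neg hi, dif_neg hi, if_neg (fun h => hi (by rw [h]; exact hj))]
  · rw [dif_neg hj, dif_neg hi]
    by_cases h : i = j
    · subst h; rfl
    · rw [if_neg (Ne.symm h), if_neg h]

/-- under `ρ > 0`, `p⊥ > 0`, `6p∥ − p⊥ > 0`, `τ < 1`, the symmetrizer `𝒜₀`
of the linearized CGL equations is symmetric positive definite. -/
theorem cglA0_posDef (ρ ppar pperp : ℝ) (H : EuclideanSpace ℝ (Fin 3)) (hH : H ≠ 0)
    (b : Fin 3 → ℝ) (hb : b = fun i => H i / ‖H‖)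
    (τ : ℝ) (hτdef : τ = (ppar - pperp) / ‖H‖ ^ 2)
    (hρ : 0 < ρ) (hperp : 0 < pperp) (h6 : 0 < 6 * ppar - pperp) (hτ : τ < 1) :
    (cglA0 ρ ppar pperp (cglB τ b)).IsSymm ∧ (cglA0 ρ ppar pperp (cglB τ b)).PosDef := by
  have hsymm := cglA0_isSymm ρ ppar pperp τ b
  refine ⟨hsymm, Matrix.PosDef.of_dotProduct_mulVec_pos hsymm ?_⟩
  -- b is a unit vector
  have hHn : (0:ℝ) < ‖H‖ := norm_pos_iff.mpr hH
  have hnormsq : H 0 ^ 2 + H 1 ^ 2 + H 2 ^ 2 = ‖H‖ ^ 2 := by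
    have := EuclideanSpace.norm_eq H
    rw [Fin.sum_univ_three] at this
    rw [this, Real.sq_sqrt (by positivity)]
    simp [sq_abs]
  have hb2 : b 0 ^ 2 + b 1 ^ 2 + b 2 ^ 2 = 1 := by
    subst hb
    field_simp
    exact hnormsq
  intro x hx
  rw [show (star x : Fin 9 → ℝ) = x from rfl, cgl_quadform]
  obtain ⟨s, hs⟩ : ∃ s, b 0 * x 4 + b 1 * x 5 + b 2 * x 6 = s := ⟨_, rfl⟩
  obtain ⟨Y, hY⟩ : ∃ Y, x 4 ^ 2 + x 5 ^ 2 + x 6 ^ 2 = Y := ⟨_, rfl⟩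
  rw [hs, hY]
  -- Cauchy–Schwarz
  have hCS : s ^ 2 ≤ Y := by
    rw [← hs, ← hY]
    have h1 := sq_nonneg (b 0 * x 5 - b 1 * x 4)
    have h2 := sq_nonneg (b 0 * x 6 - b 2 * x 4)
    have h3 := sq_nonneg (b 1 * x 6 - b 2 * x 5)
    nlinarith [h1, h2, h3, hb2, sq_nonneg (x 4), sq_nonneg (x 5), sq_nonneg (x 6)]
  have hYnn : 0 ≤ Y := by rw [← hY]; positivity
  -- middle block
  have hMnn : 0 ≤ (1 - τ) * Y + τ * s ^ 2 := by
    rcases le_total τ 0 with h | h <;> nlinarith [sq_nonneg s]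
  have hMpos : 0 < Y → 0 < (1 - τ) * Y + τ * s ^ 2 := by
    intro hYpos
    rcases le_total τ 0 with h | h <;> nlinarith [sq_nonneg s]
  have h0nn : 0 ≤ 1/(2*pperp) * x 0 ^ 2 := by positivity
  have h123nn : 0 ≤ ρ * (x 1 ^ 2 + x 2 ^ 2 + x 3 ^ 2) := by positivity
  have h7nn : 0 ≤ 2/(6*ppar-pperp) * x 7 ^ 2 := by positivity
  have h8nn : 0 ≤ x 8 ^ 2 := sq_nonneg _
  obtain ⟨i, hi⟩ := Function.ne_iff.mp hx
  fin_cases i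
  · have h' : x 0 ≠ 0 := hi
    have : 0 < 1/(2*pperp) * x 0 ^ 2 := by positivity
    linarith
  · have h' : x 1 ≠ 0 := hi
    have hx1 : (0:ℝ) < x 1 ^ 2 := by positivity
    have : 0 < ρ * (x 1 ^ 2 + x 2 ^ 2 + x 3 ^ 2) := by
      nlinarith [sq_nonneg (x 2), sq_nonneg (x 3)]
    linarith
  · have h' : x 2 ≠ 0 := hi
    have hx1 : (0:ℝ) < x 2 ^ 2 := by positivity
    have : 0 < ρ * (x 1 ^ 2 + x 2 ^ 2 + x 3 ^ 2) := by
      nlinarith [sq_nonneg (x 1), sq_nonneg (x 3)]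
    linarith
  · have h' : x 3 ≠ 0 := hi
    have hx1 : (0:ℝ) < x 3 ^ 2 := by positivity
    have : 0 < ρ * (x 1 ^ 2 + x 2 ^ 2 + x 3 ^ 2) := by
      nlinarith [sq_nonneg (x 1), sq_nonneg (x 2)]
    linarith
  · have h' : x 4 ≠ 0 := hi
    have hx1 : (0:ℝ) < x 4 ^ 2 := by positivity
    have : 0 < (1 - τ) * Y + τ * s ^ 2 := by
      apply hMpos; rw [← hY]; nlinarith [sq_nonneg (x 5), sq_nonneg (x 6)]
    linarith
  · have h' : x 5 ≠ 0 := hi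
    have hx1 : (0:ℝ) < x 5 ^ 2 := by positivity
    have : 0 < (1 - τ) * Y + τ * s ^ 2 := by
      apply hMpos; rw [← hY]; nlinarith [sq_nonneg (x 4), sq_nonneg (x 6)]
    linarith
  · have h' : x 6 ≠ 0 := hi
    have hx1 : (0:ℝ) < x 6 ^ 2 := by positivity
    have : 0 < (1 - τ) * Y + τ * s ^ 2 := by
      apply hMpos; rw [← hY]; nlinarith [sq_nonneg (x 4), sq_nonneg (x 5)]
    linarith
  · have h' : x 7 ≠ 0 := hi
    have : 0 < 2/(6*ppar-pperp) * x 7 ^ 2 := by positivity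
    linarith
  · have h' : x 8 ≠ 0 := hi
    have : 0 < x 8 ^ 2 := by positivity
    linarith
end

section
/- Let p∥ > 0, p⊥ > 0, and H ∈ ℝ³ with H ≠ 0, and set τ = (p∥ − p⊥)/|H|², a_p = p⊥/p∥, β⊥ = 2p⊥/|H|². If τ > −1/a_p, then a_p < 6(1 + 1/β⊥). -/
/-- In the CGL model, the hyperbolicity condition `τ > −1/a_p`
prevents the mirror instability: it implies `a_p < 6(1 + 1/β⊥)`. -/
theorem cgl_no_mirror_instability (ppar pperp : ℝ) (hpar : 0 < ppar) (hperp : 0 < pperp)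
    (H : EuclideanSpace ℝ (Fin 3)) (hH : H ≠ 0)
    (hτ : (ppar - pperp) / ‖H‖ ^ 2 > -(1 / (pperp / ppar))) :
    pperp / ppar < 6 * (1 + 1 / (2 * pperp / ‖H‖ ^ 2)) := by
  have hHpos : (0:ℝ) < ‖H‖ := norm_pos_iff.mpr hH
  have hH2 : (0:ℝ) < ‖H‖ ^ 2 := by positivity
  rw [one_div, inv_div, gt_iff_lt, lt_div_iff₀ hH2] at hτ
  have goal' : pperp / ppar < 6 + 3 * (‖H‖ ^ 2 / pperp) := by
    have hτ' : -ppar * ‖H‖ ^ 2 < (ppar - pperp) * pperp := by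
      have h1 := mul_lt_mul_of_pos_right hτ hperp
      have e : -(ppar / pperp) * ‖H‖ ^ 2 * pperp = -ppar * ‖H‖ ^ 2 := by
        field_simp
      linarith [e ▸ h1]
    have hdiv : ‖H‖ ^ 2 / pperp * pperp = ‖H‖ ^ 2 := div_mul_cancel₀ _ (ne_of_gt hperp)
    rw [div_lt_iff₀ hpar]
    nlinarith [mul_pos hperp hH2, div_nonneg (le_of_lt hH2) (le_of_lt hperp)]
  calc pperp / ppar < 6 + 3 * (‖H‖ ^ 2 / pperp) := goal'
    _ = 6 * (1 + 1 / (2 * pperp / ‖H‖ ^ 2)) := by field_simp; ring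
end
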